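/- arXiv:1804.01821 — 5 statements merged into one kernel-verified Lean document; each statement's English description precedes it below -/
import Mathlib

section
/- Let 𝒮 be a weakly compatible split system on a finite set X containing an octahedral split subsystem 𝒮₁ ⊆ 𝒮. Then every split S ∈ 𝒮 \ 𝒮₁ is compatible with every split in 𝒮₁. -/
variable {X : Type*}

/-- `S` is a split of `X`: an unordered pair `{A, Aᶜ}` of nonempty complementary parts. -/
def IsSplit (S : Set (Set X)) : Prop :=
  ∃ A : Set X, A.Nonempty ∧ Aᶜ.Nonempty ∧ S = {A, Aᶜ}

/-- Two splits are compatible if some part of one and some part of the other cover `X`. -/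
def Compatible (S T : Set (Set X)) : Prop :=
  ∃ A ∈ S, ∃ B ∈ T, A ∪ B = Set.univ

/-- `x` and `y` lie in the same part of the split `S`, i.e. `S(x) = S(y)`. -/
def SameSide (S : Set (Set X)) (x y : X) : Prop :=
  ∀ A ∈ S, (x ∈ A ↔ y ∈ A)

/-- A split system is weakly compatible if there are no three splits `S₁, S₂, S₃` and
four elements `x₀, x₁, x₂, x₃` with `S_j(x_i) = S_j(x₀)` iff `i = j`. -/
def WeaklyCompatible (𝒮 : Set (Set (Set X))) : Prop :=
  ¬ ∃ (S : Fin 3 → Set (Set X)) (x : Fin 4 → X),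
      (∀ j, S j ∈ 𝒮) ∧ ∀ i j : Fin 3, (SameSide (S j) (x i.succ) (x 0) ↔ i = j)

/-- A split system is octahedral if it arises from a partition `X = X₁ ∪̇ ... ∪̇ X₆`
as `S_i = X_i ∪ X_{i+1} ∪ X_{i+2} | X_{i+3} ∪ X_{i+4} ∪ X_{i+5}` (`i = 1, 2, 3`,
indices mod 6) together with `S₄ = X₁ ∪ X₃ ∪ X₅ | X₂ ∪ X₄ ∪ X₆`. -/
def IsOctahedral (𝒮 : Set (Set (Set X))) : Prop :=
  ∃ Y : ℕ → Set X,
    (∀ i < 6, (Y i).Nonempty) ∧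
    (∀ i < 6, ∀ j < 6, i ≠ j → Y i ∩ Y j = ∅) ∧
    (⋃ i ∈ Finset.range 6, Y i) = Set.univ ∧
    𝒮 = {T | (∃ i < 3, T = {Y i ∪ Y (i+1) ∪ Y (i+2),
                            Y ((i+3) % 6) ∪ Y ((i+4) % 6) ∪ Y ((i+5) % 6)}) ∨
             T = {Y 0 ∪ Y 2 ∪ Y 4, Y 1 ∪ Y 3 ∪ Y 5}}

lemma sameSide_pair (C : Set X) (x y : X) :
    SameSide {C, Cᶜ} x y ↔ (x ∈ C ↔ y ∈ C) := by
  constructor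
  · intro h; exact h C (Or.inl rfl)
  · rintro h A (rfl | rfl)
    · exact h
    · simpa using h.not

lemma wc3 {𝒮 : Set (Set (Set X))} (hwc : WeaklyCompatible 𝒮)
    {C1 C2 C3 : Set X}
    (h1 : {C1, C1ᶜ} ∈ 𝒮) (h2 : {C2, C2ᶜ} ∈ 𝒮) (h3 : {C3, C3ᶜ} ∈ 𝒮)
    (n0 : (C1 ∩ C2 ∩ C3).Nonempty) (n1 : ((C1 ∩ C2ᶜ) ∩ C3ᶜ).Nonempty)
    (n2 : ((C1ᶜ ∩ C2) ∩ C3ᶜ).Nonempty) (n3 : ((C1ᶜ ∩ C2ᶜ) ∩ C3).Nonempty) : False := by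
  obtain ⟨x0, ⟨hx01, hx02⟩, hx03⟩ := n0
  obtain ⟨x1, ⟨hx11, hx12⟩, hx13⟩ := n1
  obtain ⟨x2, ⟨hx21, hx22⟩, hx23⟩ := n2
  obtain ⟨x3, ⟨hx31, hx32⟩, hx33⟩ := n3
  apply hwc
  refine ⟨![{C1, C1ᶜ}, {C2, C2ᶜ}, {C3, C3ᶜ}], ![x0, x1, x2, x3], ?_, ?_⟩
  · intro j; fin_cases j <;> assumption
  · intro i j
    fin_cases i <;> fin_cases j
    · exact iff_of_true ((sameSide_pair C1 x1 x0).mpr (iff_of_true hx11 hx01)) rfl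
    · exact iff_of_false (fun h => hx12 ((h C2 (Or.inl rfl)).mpr hx02)) (by decide)
    · exact iff_of_false (fun h => hx13 ((h C3 (Or.inl rfl)).mpr hx03)) (by decide)
    · exact iff_of_false (fun h => hx21 ((h C1 (Or.inl rfl)).mpr hx01)) (by decide)
    · exact iff_of_true ((sameSide_pair C2 x2 x0).mpr (iff_of_true hx22 hx02)) rfl
    · exact iff_of_false (fun h => hx23 ((h C3 (Or.inl rfl)).mpr hx03)) (by decide)
    · exact iff_of_false (fun h => hx31 ((h C1 (Or.inl rfl)).mpr hx01)) (by decide)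
    · exact iff_of_false (fun h => hx32 ((h C2 (Or.inl rfl)).mpr hx02)) (by decide)
    · exact iff_of_true ((sameSide_pair C3 x3 x0).mpr (iff_of_true hx33 hx03)) rfl

lemma keyBool : ∀ a0 a1 a2 a3 a4 a5 b0 b1 b2 b3 b4 b5 : Bool,
    ((a0 || b0) = true) →
    ((a1 || b1) = true) →
    ((a2 || b2) = true) →
    ((a3 || b3) = true) →
    ((a4 || b4) = true) →
    ((a5 || b5) = true) →
    (¬(((a1 || a2) && ((a4 || a5) && (b0 && b3))) = true)) →
    (¬(((b1 || b2) && ((b4 || b5) && (a0 && a3))) = true)) →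
    (¬((a2 && (a5 && ((b0 || b1) && (b3 || b4)))) = true)) →
    (¬((b2 && (b5 && ((a0 || a1) && (a3 || a4)))) = true)) →
    (¬(((a0 || a2) && ((a3 || a5) && (b1 && b4))) = true)) →
    (¬(((b0 || b2) && ((b3 || b5) && (a1 && a4))) = true)) →
    (¬(((a2 || a3) && ((a5 || a0) && (b1 && b4))) = true)) →
    (¬(((b2 || b3) && ((b5 || b0) && (a1 && a4))) = true)) →
    (¬((a2 && (a5 && ((b1 || b3) && (b4 || b0)))) = true)) →
    (¬((b2 && (b5 && ((a1 || a3) && (a4 || a0)))) = true)) →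
    (¬(((a2 || a4) && ((a5 || a1) && (b3 && b0))) = true)) →
    (¬(((b2 || b4) && ((b5 || b1) && (a3 && a0))) = true)) →
    ((((a0 || (a1 || a2)) && ((a3 || (a4 || a5)) && ((b0 || (b1 || b2)) && (b3 || (b4 || b5))))) || (((a1 || (a2 || a3)) && ((a4 || (a5 || a0)) && ((b1 || (b2 || b3)) && (b4 || (b5 || b0))))) || (((a2 || (a3 || a4)) && ((a5 || (a0 || a1)) && ((b2 || (b3 || b4)) && (b5 || (b0 || b1))))) || ((a0 || (a2 || a4)) && ((a1 || (a3 || a5)) && ((b0 || (b2 || b4)) && (b1 || (b3 || b5)))))))) = true) →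
    ((((a0 && (a1 && (a2 && (!a3 && (!a4 && (!a5 && (!b0 && (!b1 && (!b2 && (b3 && (b4 && b5)))))))))))) || (((!a0 && (a1 && (a2 && (a3 && (!a4 && (!a5 && (b0 && (!b1 && (!b2 && (!b3 && (b4 && b5)))))))))))) || (((!a0 && (!a1 && (a2 && (a3 && (a4 && (!a5 && (b0 && (b1 && (!b2 && (!b3 && (!b4 && b5)))))))))))) || (((a0 && (!a1 && (a2 && (!a3 && (a4 && (!a5 && (!b0 && (b1 && (!b2 && (b3 && (!b4 && b5)))))))))))) || (((!a0 && (!a1 && (!a2 && (a3 && (a4 && (a5 && (b0 && (b1 && (b2 && (!b3 && (!b4 && !b5)))))))))))) || (((a0 && (!a1 && (!a2 && (!a3 && (a4 && (a5 && (!b0 && (b1 && (b2 && (b3 && (!b4 && !b5)))))))))))) || (((a0 && (a1 && (!a2 && (!a3 && (!a4 && (a5 && (!b0 && (!b1 && (b2 && (b3 && (b4 && !b5)))))))))))) || ((!a0 && (a1 && (!a2 && (a3 && (!a4 && (a5 && (b0 && (!b1 && (b2 && (!b3 && (b4 && !b5))))))))))))))))))) = true) := by decide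

lemma keyProp (a0 a1 a2 a3 a4 a5 b0 b1 b2 b3 b4 b5 : Prop)
    (h0 : a0 ∨ b0)
    (h1 : a1 ∨ b1)
    (h2 : a2 ∨ b2)
    (h3 : a3 ∨ b3)
    (h4 : a4 ∨ b4)
    (h5 : a5 ∨ b5)
    (c0 : ¬((a1 ∨ a2) ∧ ((a4 ∨ a5) ∧ (b0 ∧ b3))))
    (c1 : ¬((b1 ∨ b2) ∧ ((b4 ∨ b5) ∧ (a0 ∧ a3))))
    (c2 : ¬(a2 ∧ (a5 ∧ ((b0 ∨ b1) ∧ (b3 ∨ b4)))))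
    (c3 : ¬(b2 ∧ (b5 ∧ ((a0 ∨ a1) ∧ (a3 ∨ a4)))))
    (c4 : ¬((a0 ∨ a2) ∧ ((a3 ∨ a5) ∧ (b1 ∧ b4))))
    (c5 : ¬((b0 ∨ b2) ∧ ((b3 ∨ b5) ∧ (a1 ∧ a4))))
    (c6 : ¬((a2 ∨ a3) ∧ ((a5 ∨ a0) ∧ (b1 ∧ b4))))
    (c7 : ¬((b2 ∨ b3) ∧ ((b5 ∨ b0) ∧ (a1 ∧ a4))))
    (c8 : ¬(a2 ∧ (a5 ∧ ((b1 ∨ b3) ∧ (b4 ∨ b0)))))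
    (c9 : ¬(b2 ∧ (b5 ∧ ((a1 ∨ a3) ∧ (a4 ∨ a0)))))
    (c10 : ¬((a2 ∨ a4) ∧ ((a5 ∨ a1) ∧ (b3 ∧ b0))))
    (c11 : ¬((b2 ∨ b4) ∧ ((b5 ∨ b1) ∧ (a3 ∧ a0))))
    (hinc : ((a0 ∨ (a1 ∨ a2)) ∧ ((a3 ∨ (a4 ∨ a5)) ∧ ((b0 ∨ (b1 ∨ b2)) ∧ (b3 ∨ (b4 ∨ b5))))) ∨ ((a1 ∨ (a2 ∨ a3)) ∧ ((a4 ∨ (a5 ∨ a0)) ∧ ((b1 ∨ (b2 ∨ b3)) ∧ (b4 ∨ (b5 ∨ b0))))) ∨ ((a2 ∨ (a3 ∨ a4)) ∧ ((a5 ∨ (a0 ∨ a1)) ∧ ((b2 ∨ (b3 ∨ b4)) ∧ (b5 ∨ (b0 ∨ b1))))) ∨ ((a0 ∨ (a2 ∨ a4)) ∧ ((a1 ∨ (a3 ∨ a5)) ∧ ((b0 ∨ (b2 ∨ b4)) ∧ (b1 ∨ (b3 ∨ b5)))))) :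
    (a0 ∧ a1 ∧ a2 ∧ ¬a3 ∧ ¬a4 ∧ ¬a5 ∧ ¬b0 ∧ ¬b1 ∧ ¬b2 ∧ b3 ∧ b4 ∧ b5) ∨ (¬a0 ∧ a1 ∧ a2 ∧ a3 ∧ ¬a4 ∧ ¬a5 ∧ b0 ∧ ¬b1 ∧ ¬b2 ∧ ¬b3 ∧ b4 ∧ b5) ∨ (¬a0 ∧ ¬a1 ∧ a2 ∧ a3 ∧ a4 ∧ ¬a5 ∧ b0 ∧ b1 ∧ ¬b2 ∧ ¬b3 ∧ ¬b4 ∧ b5) ∨ (a0 ∧ ¬a1 ∧ a2 ∧ ¬a3 ∧ a4 ∧ ¬a5 ∧ ¬b0 ∧ b1 ∧ ¬b2 ∧ b3 ∧ ¬b4 ∧ b5) ∨ (¬a0 ∧ ¬a1 ∧ ¬a2 ∧ a3 ∧ a4 ∧ a5 ∧ b0 ∧ b1 ∧ b2 ∧ ¬b3 ∧ ¬b4 ∧ ¬b5) ∨ (a0 ∧ ¬a1 ∧ ¬a2 ∧ ¬a3 ∧ a4 ∧ a5 ∧ ¬b0 ∧ b1 ∧ b2 ∧ b3 ∧ ¬b4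 ∧ ¬b5) ∨ (a0 ∧ a1 ∧ ¬a2 ∧ ¬a3 ∧ ¬a4 ∧ a5 ∧ ¬b0 ∧ ¬b1 ∧ b2 ∧ b3 ∧ b4 ∧ ¬b5) ∨ (¬a0 ∧ a1 ∧ ¬a2 ∧ a3 ∧ ¬a4 ∧ a5 ∧ b0 ∧ ¬b1 ∧ b2 ∧ ¬b3 ∧ b4 ∧ ¬b5) := by
  classical
  have H := keyBool (decide a0) (decide a1) (decide a2) (decide a3) (decide a4) (decide a5) (decide b0) (decide b1) (decide b2) (decide b3) (decide b4) (decide b5)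
      (by simpa using h0)
      (by simpa using h1)
      (by simpa using h2)
      (by simpa using h3)
      (by simpa using h4)
      (by simpa using h5)
      (fun h => c0 (by simpa using h))
      (fun h => c1 (by simpa using h))
      (fun h => c2 (by simpa using h))
      (fun h => c3 (by simpa using h))
      (fun h => c4 (by simpa using h))
      (fun h => c5 (by simpa using h))
      (fun h => c6 (by simpa using h))
      (fun h => c7 (by simpa using h))
      (fun h => c8 (by simpa using h))
      (fun h => c9 (by simpa using h))
      (fun h => c10 (by simpa using h))
      (fun h => c11 (by simpa using h))
      (by simpa using hinc)
  simpa [Bool.not_eq_true', decide_eq_false_iff_not] using H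

/-- in a weakly compatible split system `𝒮` containing an octahedral
subsystem `𝒮₁`, every split of `𝒮 \ 𝒮₁` is compatible with every split of `𝒮₁`. -/
theorem stmt3 [Fintype X] (𝒮 𝒮₁ : Set (Set (Set X)))
    (hsplits : ∀ S ∈ 𝒮, IsSplit S)
    (hwc : WeaklyCompatible 𝒮)
    (hsub : 𝒮₁ ⊆ 𝒮) (hoct : IsOctahedral 𝒮₁) :
    ∀ S ∈ 𝒮, S ∉ 𝒮₁ → ∀ S' ∈ 𝒮₁, Compatible S S' := by
  intro S hS hSnot S' hS'
  obtain ⟨Y, hYne, hdisj, hcov, h1⟩ := hoct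
  obtain ⟨A, hAne, hAcne, hSeq⟩ := hsplits S hS
  subst hSeq
  by_contra hcomp
  have hmem : ∀ x : X, ∃ k, k < 6 ∧ x ∈ Y k := by
    intro x
    have hx : x ∈ ⋃ i ∈ Finset.range 6, Y i := by rw [hcov]; trivial
    simpa using hx
  have huniq : ∀ (x : X) (k l : ℕ), k < 6 → l < 6 → x ∈ Y k → x ∈ Y l → k = l := by
    intro x k l hk hl h1' h2'
    by_contra hne
    exact Set.eq_empty_iff_forall_notMem.mp (hdisj k hk l hl hne) x ⟨h1', h2'⟩
  have ecmp : ∀ x : X, ∀ k, k < 6 → x ∈ Y k → ∀ l, l < 6 → (x ∈ Y l ↔ l = k) :=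
    fun x k hk6 hxk l hl => ⟨fun h => huniq x l k hl hk6 h hxk, fun h => h ▸ hxk⟩
  have hc0 : (Y 0 ∪ Y 1 ∪ Y 2)ᶜ = Y 3 ∪ Y 4 ∪ Y 5 := by
    ext x
    obtain ⟨k, hk6, hxk⟩ := hmem x
    have e := ecmp x k hk6 hxk
    simp only [Set.mem_compl_iff, Set.mem_union, e 0 (by norm_num), e 1 (by norm_num),
      e 2 (by norm_num), e 3 (by norm_num), e 4 (by norm_num), e 5 (by norm_num)]
    omega
  have hcr0 : (Y 3 ∪ Y 4 ∪ Y 5)ᶜ = Y 0 ∪ Y 1 ∪ Y 2 := by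
    ext x
    obtain ⟨k, hk6, hxk⟩ := hmem x
    have e := ecmp x k hk6 hxk
    simp only [Set.mem_compl_iff, Set.mem_union, e 0 (by norm_num), e 1 (by norm_num),
      e 2 (by norm_num), e 3 (by norm_num), e 4 (by norm_num), e 5 (by norm_num)]
    omega
  have hc1 : (Y 1 ∪ Y 2 ∪ Y 3)ᶜ = Y 4 ∪ Y 5 ∪ Y 0 := by
    ext x
    obtain ⟨k, hk6, hxk⟩ := hmem x
    have e := ecmp x k hk6 hxk
    simp only [Set.mem_compl_iff, Set.mem_union, e 0 (by norm_num), e 1 (by norm_num),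
      e 2 (by norm_num), e 3 (by norm_num), e 4 (by norm_num), e 5 (by norm_num)]
    omega
  have hcr1 : (Y 4 ∪ Y 5 ∪ Y 0)ᶜ = Y 1 ∪ Y 2 ∪ Y 3 := by
    ext x
    obtain ⟨k, hk6, hxk⟩ := hmem x
    have e := ecmp x k hk6 hxk
    simp only [Set.mem_compl_iff, Set.mem_union, e 0 (by norm_num), e 1 (by norm_num),
      e 2 (by norm_num), e 3 (by norm_num), e 4 (by norm_num), e 5 (by norm_num)]
    omega
  have hc2 : (Y 2 ∪ Y 3 ∪ Y 4)ᶜ = Y 5 ∪ Y 0 ∪ Y 1 := by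
    ext x
    obtain ⟨k, hk6, hxk⟩ := hmem x
    have e := ecmp x k hk6 hxk
    simp only [Set.mem_compl_iff, Set.mem_union, e 0 (by norm_num), e 1 (by norm_num),
      e 2 (by norm_num), e 3 (by norm_num), e 4 (by norm_num), e 5 (by norm_num)]
    omega
  have hcr2 : (Y 5 ∪ Y 0 ∪ Y 1)ᶜ = Y 2 ∪ Y 3 ∪ Y 4 := by
    ext x
    obtain ⟨k, hk6, hxk⟩ := hmem x
    have e := ecmp x k hk6 hxk
    simp only [Set.mem_compl_iff, Set.mem_union, e 0 (by norm_num), e 1 (by norm_num),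
      e 2 (by norm_num), e 3 (by norm_num), e 4 (by norm_num), e 5 (by norm_num)]
    omega
  have hc3 : (Y 0 ∪ Y 2 ∪ Y 4)ᶜ = Y 1 ∪ Y 3 ∪ Y 5 := by
    ext x
    obtain ⟨k, hk6, hxk⟩ := hmem x
    have e := ecmp x k hk6 hxk
    simp only [Set.mem_compl_iff, Set.mem_union, e 0 (by norm_num), e 1 (by norm_num),
      e 2 (by norm_num), e 3 (by norm_num), e 4 (by norm_num), e 5 (by norm_num)]
    omega
  have hcr3 : (Y 1 ∪ Y 3 ∪ Y 5)ᶜ = Y 0 ∪ Y 2 ∪ Y 4 := by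
    ext x
    obtain ⟨k, hk6, hxk⟩ := hmem x
    have e := ecmp x k hk6 hxk
    simp only [Set.mem_compl_iff, Set.mem_union, e 0 (by norm_num), e 1 (by norm_num),
      e 2 (by norm_num), e 3 (by norm_num), e 4 (by norm_num), e 5 (by norm_num)]
    omega
  have hT0S : ({Y 0 ∪ Y 1 ∪ Y 2, (Y 0 ∪ Y 1 ∪ Y 2)ᶜ} : Set (Set X)) ∈ 𝒮 := by
    apply hsub; rw [h1]; rw [hc0]
    exact Or.inl ⟨0, by norm_num, by norm_num⟩
  have hT1S : ({Y 1 ∪ Y 2 ∪ Y 3, (Y 1 ∪ Y 2 ∪ Y 3)ᶜ} : Set (Set X)) ∈ 𝒮 := by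
    apply hsub; rw [h1]; rw [hc1]
    exact Or.inl ⟨1, by norm_num, by norm_num⟩
  have hT2S : ({Y 2 ∪ Y 3 ∪ Y 4, (Y 2 ∪ Y 3 ∪ Y 4)ᶜ} : Set (Set X)) ∈ 𝒮 := by
    apply hsub; rw [h1]; rw [hc2]
    exact Or.inl ⟨2, by norm_num, by norm_num⟩
  have hT3S : ({Y 0 ∪ Y 2 ∪ Y 4, (Y 0 ∪ Y 2 ∪ Y 4)ᶜ} : Set (Set X)) ∈ 𝒮 := by
    apply hsub; rw [h1]; rw [hc3]
    exact Or.inr rfl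
  have hSA' : ({Aᶜ, Aᶜᶜ} : Set (Set X)) ∈ 𝒮 := by
    rw [compl_compl, Set.pair_comm]; exact hS
  have hcv : ∀ k, k < 6 → (A ∩ Y k).Nonempty ∨ (Aᶜ ∩ Y k).Nonempty := by
    intro k hk
    obtain ⟨y, hy⟩ := hYne k hk
    by_cases hyA : y ∈ A
    · exact Or.inl ⟨y, hyA, hy⟩
    · exact Or.inr ⟨y, hyA, hy⟩
  have pt : ∀ {D B C : Set X} (k : ℕ), Y k ⊆ B → Y k ⊆ C → (D ∩ Y k).Nonempty →
      ((D ∩ B) ∩ C).Nonempty := by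
    rintro D B C k hB hC ⟨x, hxD, hxk⟩
    exact ⟨x, ⟨hxD, hB hxk⟩, hC hxk⟩
  have su1 : ∀ P Q R : Set X, P ⊆ P ∪ Q ∪ R :=
    fun P Q R => Set.subset_union_left.trans Set.subset_union_left
  have su2 : ∀ P Q R : Set X, Q ⊆ P ∪ Q ∪ R :=
    fun P Q R => Set.subset_union_right.trans Set.subset_union_left
  have su3 : ∀ P Q R : Set X, R ⊆ P ∪ Q ∪ R := fun P Q R => Set.subset_union_right
  have splitU : ∀ (D P Q R : Set X), (D ∩ (P ∪ Q ∪ R)).Nonempty →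
      (D ∩ P).Nonempty ∨ (D ∩ Q).Nonempty ∨ (D ∩ R).Nonempty := by
    rintro D P Q R ⟨x, hxD, (h | h) | h⟩
    · exact Or.inl ⟨x, hxD, h⟩
    · exact Or.inr (Or.inl ⟨x, hxD, h⟩)
    · exact Or.inr (Or.inr ⟨x, hxD, h⟩)
  have quad : ∀ B B' : Set X, B' = Bᶜ → ¬ Compatible {A, Aᶜ} {B, B'} →
      (A ∩ B).Nonempty ∧ (A ∩ Bᶜ).Nonempty ∧ (Aᶜ ∩ B).Nonempty ∧ (Aᶜ ∩ Bᶜ).Nonempty := by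
    intro B B' hB' hnc
    subst hB'
    refine ⟨?_, ?_, ?_, ?_⟩ <;> rw [Set.nonempty_iff_ne_empty] <;> intro he <;> apply hnc
    · exact ⟨Aᶜ, Or.inr rfl, Bᶜ, Or.inr rfl,
        by rw [show Aᶜ ∪ Bᶜ = (A ∩ B)ᶜ by rw [Set.compl_inter], he, Set.compl_empty]⟩
    · exact ⟨Aᶜ, Or.inr rfl, B, Or.inl rfl,
        by rw [show Aᶜ ∪ B = (A ∩ Bᶜ)ᶜ by rw [Set.compl_inter, compl_compl], he, Set.compl_empty]⟩
    · exact ⟨A, Or.inl rfl, Bᶜ, Or.inr rfl,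
        by rw [show A ∪ Bᶜ = (Aᶜ ∩ B)ᶜ by rw [Set.compl_inter, compl_compl], he, Set.compl_empty]⟩
    · exact ⟨A, Or.inl rfl, B, Or.inl rfl,
        by rw [show A ∪ B = (Aᶜ ∩ Bᶜ)ᶜ by rw [Set.compl_inter, compl_compl, compl_compl], he, Set.compl_empty]⟩
  have kc01e : ¬(((A ∩ Y 1).Nonempty ∨ (A ∩ Y 2).Nonempty) ∧ (((A ∩ Y 4).Nonempty ∨ (A ∩ Y 5).Nonempty) ∧ ((Aᶜ ∩ Y 0).Nonempty ∧ (Aᶜ ∩ Y 3).Nonempty))) := by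
    rintro ⟨hP, hQ, hR, hW⟩
    refine wc3 hwc hS hT0S hT1S ?_ ?_ ?_ ?_
    · rcases hP with h | h
      · exact pt 1 (su2 _ _ _) (su1 _ _ _) h
      · exact pt 2 (su3 _ _ _) (su2 _ _ _) h
    · rcases hQ with h | h
      · exact pt 4 (by rw [hc0]; exact su2 _ _ _) (by rw [hc1]; exact su1 _ _ _) h
      · exact pt 5 (by rw [hc0]; exact su3 _ _ _) (by rw [hc1]; exact su2 _ _ _) h
    · exact pt 0 (su1 _ _ _) (by rw [hc1]; exact su3 _ _ _) hR
    · exact pt 3 (by rw [hc0]; exact su1 _ _ _) (su3 _ _ _) hW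
  have kc01o : ¬(((Aᶜ ∩ Y 1).Nonempty ∨ (Aᶜ ∩ Y 2).Nonempty) ∧ (((Aᶜ ∩ Y 4).Nonempty ∨ (Aᶜ ∩ Y 5).Nonempty) ∧ ((A ∩ Y 0).Nonempty ∧ (A ∩ Y 3).Nonempty))) := by
    rintro ⟨hP, hQ, hR, hW⟩
    refine wc3 hwc hSA' hT0S hT1S ?_ ?_ ?_ ?_
    · rcases hP with h | h
      · exact pt 1 (su2 _ _ _) (su1 _ _ _) h
      · exact pt 2 (su3 _ _ _) (su2 _ _ _) h
    · rcases hQ with h | h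
      · exact pt 4 (by rw [hc0]; exact su2 _ _ _) (by rw [hc1]; exact su1 _ _ _) h
      · exact pt 5 (by rw [hc0]; exact su3 _ _ _) (by rw [hc1]; exact su2 _ _ _) h
    · rw [compl_compl]; exact pt 0 (su1 _ _ _) (by rw [hc1]; exact su3 _ _ _) hR
    · rw [compl_compl]; exact pt 3 (by rw [hc0]; exact su1 _ _ _) (su3 _ _ _) hW
  have kc02e : ¬((A ∩ Y 2).Nonempty ∧ ((A ∩ Y 5).Nonempty ∧ (((Aᶜ ∩ Y 0).Nonempty ∨ (Aᶜ ∩ Y 1).Nonempty) ∧ ((Aᶜ ∩ Y 3).Nonempty ∨ (Aᶜ ∩ Y 4).Nonempty)))) := by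
    rintro ⟨hP, hQ, hR, hW⟩
    refine wc3 hwc hS hT0S hT2S ?_ ?_ ?_ ?_
    · exact pt 2 (su3 _ _ _) (su1 _ _ _) hP
    · exact pt 5 (by rw [hc0]; exact su3 _ _ _) (by rw [hc2]; exact su1 _ _ _) hQ
    · rcases hR with h | h
      · exact pt 0 (su1 _ _ _) (by rw [hc2]; exact su2 _ _ _) h
      · exact pt 1 (su2 _ _ _) (by rw [hc2]; exact su3 _ _ _) h
    · rcases hW with h | h
      · exact pt 3 (by rw [hc0]; exact su1 _ _ _) (su2 _ _ _) h
      · exact pt 4 (by rw [hc0]; exact su2 _ _ _) (su3 _ _ _) h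
  have kc02o : ¬((Aᶜ ∩ Y 2).Nonempty ∧ ((Aᶜ ∩ Y 5).Nonempty ∧ (((A ∩ Y 0).Nonempty ∨ (A ∩ Y 1).Nonempty) ∧ ((A ∩ Y 3).Nonempty ∨ (A ∩ Y 4).Nonempty)))) := by
    rintro ⟨hP, hQ, hR, hW⟩
    refine wc3 hwc hSA' hT0S hT2S ?_ ?_ ?_ ?_
    · exact pt 2 (su3 _ _ _) (su1 _ _ _) hP
    · exact pt 5 (by rw [hc0]; exact su3 _ _ _) (by rw [hc2]; exact su1 _ _ _) hQ
    · rw [compl_compl]; rcases hR with h | h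
      · exact pt 0 (su1 _ _ _) (by rw [hc2]; exact su2 _ _ _) h
      · exact pt 1 (su2 _ _ _) (by rw [hc2]; exact su3 _ _ _) h
    · rw [compl_compl]; rcases hW with h | h
      · exact pt 3 (by rw [hc0]; exact su1 _ _ _) (su2 _ _ _) h
      · exact pt 4 (by rw [hc0]; exact su2 _ _ _) (su3 _ _ _) h
  have kc03e : ¬(((A ∩ Y 0).Nonempty ∨ (A ∩ Y 2).Nonempty) ∧ (((A ∩ Y 3).Nonempty ∨ (A ∩ Y 5).Nonempty) ∧ ((Aᶜ ∩ Y 1).Nonempty ∧ (Aᶜ ∩ Y 4).Nonempty))) := by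
    rintro ⟨hP, hQ, hR, hW⟩
    refine wc3 hwc hS hT0S hT3S ?_ ?_ ?_ ?_
    · rcases hP with h | h
      · exact pt 0 (su1 _ _ _) (su1 _ _ _) h
      · exact pt 2 (su3 _ _ _) (su2 _ _ _) h
    · rcases hQ with h | h
      · exact pt 3 (by rw [hc0]; exact su1 _ _ _) (by rw [hc3]; exact su2 _ _ _) h
      · exact pt 5 (by rw [hc0]; exact su3 _ _ _) (by rw [hc3]; exact su3 _ _ _) h
    · exact pt 1 (su2 _ _ _) (by rw [hc3]; exact su1 _ _ _) hR
    · exact pt 4 (by rw [hc0]; exact su2 _ _ _) (su3 _ _ _) hW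
  have kc03o : ¬(((Aᶜ ∩ Y 0).Nonempty ∨ (Aᶜ ∩ Y 2).Nonempty) ∧ (((Aᶜ ∩ Y 3).Nonempty ∨ (Aᶜ ∩ Y 5).Nonempty) ∧ ((A ∩ Y 1).Nonempty ∧ (A ∩ Y 4).Nonempty))) := by
    rintro ⟨hP, hQ, hR, hW⟩
    refine wc3 hwc hSA' hT0S hT3S ?_ ?_ ?_ ?_
    · rcases hP with h | h
      · exact pt 0 (su1 _ _ _) (su1 _ _ _) h
      · exact pt 2 (su3 _ _ _) (su2 _ _ _) h
    · rcases hQ with h | h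
      · exact pt 3 (by rw [hc0]; exact su1 _ _ _) (by rw [hc3]; exact su2 _ _ _) h
      · exact pt 5 (by rw [hc0]; exact su3 _ _ _) (by rw [hc3]; exact su3 _ _ _) h
    · rw [compl_compl]; exact pt 1 (su2 _ _ _) (by rw [hc3]; exact su1 _ _ _) hR
    · rw [compl_compl]; exact pt 4 (by rw [hc0]; exact su2 _ _ _) (su3 _ _ _) hW
  have kc12e : ¬(((A ∩ Y 2).Nonempty ∨ (A ∩ Y 3).Nonempty) ∧ (((A ∩ Y 5).Nonempty ∨ (A ∩ Y 0).Nonempty) ∧ ((Aᶜ ∩ Y 1).Nonempty ∧ (Aᶜ ∩ Y 4).Nonempty))) := by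
    rintro ⟨hP, hQ, hR, hW⟩
    refine wc3 hwc hS hT1S hT2S ?_ ?_ ?_ ?_
    · rcases hP with h | h
      · exact pt 2 (su2 _ _ _) (su1 _ _ _) h
      · exact pt 3 (su3 _ _ _) (su2 _ _ _) h
    · rcases hQ with h | h
      · exact pt 5 (by rw [hc1]; exact su2 _ _ _) (by rw [hc2]; exact su1 _ _ _) h
      · exact pt 0 (by rw [hc1]; exact su3 _ _ _) (by rw [hc2]; exact su2 _ _ _) h
    · exact pt 1 (su1 _ _ _) (by rw [hc2]; exact su3 _ _ _) hR
    · exact pt 4 (by rw [hc1]; exact su1 _ _ _) (su3 _ _ _) hW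
  have kc12o : ¬(((Aᶜ ∩ Y 2).Nonempty ∨ (Aᶜ ∩ Y 3).Nonempty) ∧ (((Aᶜ ∩ Y 5).Nonempty ∨ (Aᶜ ∩ Y 0).Nonempty) ∧ ((A ∩ Y 1).Nonempty ∧ (A ∩ Y 4).Nonempty))) := by
    rintro ⟨hP, hQ, hR, hW⟩
    refine wc3 hwc hSA' hT1S hT2S ?_ ?_ ?_ ?_
    · rcases hP with h | h
      · exact pt 2 (su2 _ _ _) (su1 _ _ _) h
      · exact pt 3 (su3 _ _ _) (su2 _ _ _) h
    · rcases hQ with h | h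
      · exact pt 5 (by rw [hc1]; exact su2 _ _ _) (by rw [hc2]; exact su1 _ _ _) h
      · exact pt 0 (by rw [hc1]; exact su3 _ _ _) (by rw [hc2]; exact su2 _ _ _) h
    · rw [compl_compl]; exact pt 1 (su1 _ _ _) (by rw [hc2]; exact su3 _ _ _) hR
    · rw [compl_compl]; exact pt 4 (by rw [hc1]; exact su1 _ _ _) (su3 _ _ _) hW
  have kc13e : ¬((A ∩ Y 2).Nonempty ∧ ((A ∩ Y 5).Nonempty ∧ (((Aᶜ ∩ Y 1).Nonempty ∨ (Aᶜ ∩ Y 3).Nonempty) ∧ ((Aᶜ ∩ Y 4).Nonempty ∨ (Aᶜ ∩ Y 0).Nonempty)))) := by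
    rintro ⟨hP, hQ, hR, hW⟩
    refine wc3 hwc hS hT1S hT3S ?_ ?_ ?_ ?_
    · exact pt 2 (su2 _ _ _) (su2 _ _ _) hP
    · exact pt 5 (by rw [hc1]; exact su2 _ _ _) (by rw [hc3]; exact su3 _ _ _) hQ
    · rcases hR with h | h
      · exact pt 1 (su1 _ _ _) (by rw [hc3]; exact su1 _ _ _) h
      · exact pt 3 (su3 _ _ _) (by rw [hc3]; exact su2 _ _ _) h
    · rcases hW with h | h
      · exact pt 4 (by rw [hc1]; exact su1 _ _ _) (su3 _ _ _) h
      · exact pt 0 (by rw [hc1]; exact su3 _ _ _) (su1 _ _ _) h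
  have kc13o : ¬((Aᶜ ∩ Y 2).Nonempty ∧ ((Aᶜ ∩ Y 5).Nonempty ∧ (((A ∩ Y 1).Nonempty ∨ (A ∩ Y 3).Nonempty) ∧ ((A ∩ Y 4).Nonempty ∨ (A ∩ Y 0).Nonempty)))) := by
    rintro ⟨hP, hQ, hR, hW⟩
    refine wc3 hwc hSA' hT1S hT3S ?_ ?_ ?_ ?_
    · exact pt 2 (su2 _ _ _) (su2 _ _ _) hP
    · exact pt 5 (by rw [hc1]; exact su2 _ _ _) (by rw [hc3]; exact su3 _ _ _) hQ
    · rw [compl_compl]; rcases hR with h | h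
      · exact pt 1 (su1 _ _ _) (by rw [hc3]; exact su1 _ _ _) h
      · exact pt 3 (su3 _ _ _) (by rw [hc3]; exact su2 _ _ _) h
    · rw [compl_compl]; rcases hW with h | h
      · exact pt 4 (by rw [hc1]; exact su1 _ _ _) (su3 _ _ _) h
      · exact pt 0 (by rw [hc1]; exact su3 _ _ _) (su1 _ _ _) h
  have kc23e : ¬(((A ∩ Y 2).Nonempty ∨ (A ∩ Y 4).Nonempty) ∧ (((A ∩ Y 5).Nonempty ∨ (A ∩ Y 1).Nonempty) ∧ ((Aᶜ ∩ Y 3).Nonempty ∧ (Aᶜ ∩ Y 0).Nonempty))) := by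
    rintro ⟨hP, hQ, hR, hW⟩
    refine wc3 hwc hS hT2S hT3S ?_ ?_ ?_ ?_
    · rcases hP with h | h
      · exact pt 2 (su1 _ _ _) (su2 _ _ _) h
      · exact pt 4 (su3 _ _ _) (su3 _ _ _) h
    · rcases hQ with h | h
      · exact pt 5 (by rw [hc2]; exact su1 _ _ _) (by rw [hc3]; exact su3 _ _ _) h
      · exact pt 1 (by rw [hc2]; exact su3 _ _ _) (by rw [hc3]; exact su1 _ _ _) h
    · exact pt 3 (su2 _ _ _) (by rw [hc3]; exact su2 _ _ _) hR
    · exact pt 0 (by rw [hc2]; exact su2 _ _ _) (su1 _ _ _) hW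
  have kc23o : ¬(((Aᶜ ∩ Y 2).Nonempty ∨ (Aᶜ ∩ Y 4).Nonempty) ∧ (((Aᶜ ∩ Y 5).Nonempty ∨ (Aᶜ ∩ Y 1).Nonempty) ∧ ((A ∩ Y 3).Nonempty ∧ (A ∩ Y 0).Nonempty))) := by
    rintro ⟨hP, hQ, hR, hW⟩
    refine wc3 hwc hSA' hT2S hT3S ?_ ?_ ?_ ?_
    · rcases hP with h | h
      · exact pt 2 (su1 _ _ _) (su2 _ _ _) h
      · exact pt 4 (su3 _ _ _) (su3 _ _ _) h
    · rcases hQ with h | h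
      · exact pt 5 (by rw [hc2]; exact su1 _ _ _) (by rw [hc3]; exact su3 _ _ _) h
      · exact pt 1 (by rw [hc2]; exact su3 _ _ _) (by rw [hc3]; exact su1 _ _ _) h
    · rw [compl_compl]; exact pt 3 (su2 _ _ _) (by rw [hc3]; exact su2 _ _ _) hR
    · rw [compl_compl]; exact pt 0 (by rw [hc2]; exact su2 _ _ _) (su1 _ _ _) hW
  have incAny : (((A ∩ Y 0).Nonempty ∨ ((A ∩ Y 1).Nonempty ∨ (A ∩ Y 2).Nonempty)) ∧ (((A ∩ Y 3).Nonempty ∨ ((A ∩ Y 4).Nonempty ∨ (A ∩ Y 5).Nonempty)) ∧ (((Aᶜ ∩ Y 0).Nonempty ∨ ((Aᶜ ∩ Y 1).Nonempty ∨ (Aᶜ ∩ Y 2).Nonempty)) ∧ ((Aᶜ ∩ Y 3).Nonempty ∨ ((Aᶜ ∩ Y 4).Nonempty ∨ (Aᶜ ∩ Y 5).Nonempty))))) ∨ (((A ∩ Y 1).Nonempty ∨ ((A ∩ Y 2).Nonempty ∨ (A ∩ Y 3).Nonempty)) ∧ (((A ∩ Y 4).Nonempty ∨ ((A ∩ Y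 5).Nonempty ∨ (A ∩ Y 0).Nonempty)) ∧ (((Aᶜ ∩ Y 1).Nonempty ∨ ((Aᶜ ∩ Y 2).Nonempty ∨ (Aᶜ ∩ Y 3).Nonempty)) ∧ ((Aᶜ ∩ Y 4).Nonempty ∨ ((Aᶜ ∩ Y 5).Nonempty ∨ (Aᶜ ∩ Y 0).Nonempty))))) ∨ (((A ∩ Y 2).Nonempty ∨ ((A ∩ Y 3).Nonempty ∨ (A ∩ Y 4).Nonempty)) ∧ (((A ∩ Y 5).Nonempty ∨ ((A ∩ Y 0).Nonempty ∨ (A ∩ Y 1).Nonempty)) ∧ (((Aᶜ ∩ Y 2).Nonempty ∨ ((Aᶜ ∩ Y 3).Nonempty ∨ (Aᶜ ∩ Y 4).Nonempty)) ∧ ((Aᶜ ∩ Y 5).Nonempty ∨ ((Aᶜ ∩ Y 0).Nonempty ∨ (Aᶜ ∩ Y 1).Nonempty))))) ∨ (((A ∩ Y 0).Nonempty ∨ ((A ∩ Y 2).Nonempty ∨ (A ∩ Y 4).Nonempty)) ∧ (((A ∩ Y 1).Nonempty ∨ ((A ∩ Y 3).Nonempty ∨ (A ∩ Y 5).Nonempty))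 ∧ (((Aᶜ ∩ Y 0).Nonempty ∨ ((Aᶜ ∩ Y 2).Nonempty ∨ (Aᶜ ∩ Y 4).Nonempty)) ∧ ((Aᶜ ∩ Y 1).Nonempty ∨ ((Aᶜ ∩ Y 3).Nonempty ∨ (Aᶜ ∩ Y 5).Nonempty))))) := by
    rw [h1] at hS'
    rcases hS' with ⟨i, hi, rfl⟩ | rfl
    · interval_cases i
      · norm_num at hcomp
        obtain ⟨q1, q2, q3, q4⟩ := quad _ _ hc0.symm hcomp
        rw [hc0] at q2 q4
        exact Or.inl ⟨splitU _ _ _ _ q1, splitU _ _ _ _ q2, splitU _ _ _ _ q3, splitU _ _ _ _ q4⟩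
      · norm_num at hcomp
        obtain ⟨q1, q2, q3, q4⟩ := quad _ _ hc1.symm hcomp
        rw [hc1] at q2 q4
        exact Or.inr (Or.inl ⟨splitU _ _ _ _ q1, splitU _ _ _ _ q2, splitU _ _ _ _ q3, splitU _ _ _ _ q4⟩)
      · norm_num at hcomp
        obtain ⟨q1, q2, q3, q4⟩ := quad _ _ hc2.symm hcomp
        rw [hc2] at q2 q4
        exact Or.inr (Or.inr (Or.inl ⟨splitU _ _ _ _ q1, splitU _ _ _ _ q2, splitU _ _ _ _ q3, splitU _ _ _ _ q4⟩))
    · obtain ⟨q1, q2, q3, q4⟩ := quad _ _ hc3.symm hcomp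
      rw [hc3] at q2 q4
      exact Or.inr (Or.inr (Or.inr ⟨splitU _ _ _ _ q1, splitU _ _ _ _ q2, splitU _ _ _ _ q3, splitU _ _ _ _ q4⟩))
  have pat := keyProp _ _ _ _ _ _ _ _ _ _ _ _ (hcv 0 (by norm_num)) (hcv 1 (by norm_num)) (hcv 2 (by norm_num)) (hcv 3 (by norm_num)) (hcv 4 (by norm_num)) (hcv 5 (by norm_num))
      kc01e kc01o kc02e kc02o kc03e kc03o kc12e kc12o kc13e kc13o kc23e kc23o incAny
  rcases pat with p | p | p | p | p | p | p | p
  · obtain ⟨ha0, ha1, ha2, hna3, hna4, hna5, hnb0, hnb1, hnb2, hb3, hb4, hb5⟩ := p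
    have hA : A = Y 0 ∪ Y 1 ∪ Y 2 := by
      apply Set.Subset.antisymm
      · intro x hx
        obtain ⟨k, hk6, hxk⟩ := hmem x
        interval_cases k
        · exact Set.mem_union_left _ (Set.mem_union_left _ hxk)
        · exact Set.mem_union_left _ (Set.mem_union_right _ hxk)
        · exact Set.mem_union_right _ hxk
        · exact absurd ⟨x, hx, hxk⟩ hna3
        · exact absurd ⟨x, hx, hxk⟩ hna4
        · exact absurd ⟨x, hx, hxk⟩ hna5
      · intro x hx
        rcases hx with (hx | hx) | hx
        · by_contra hxA; exact hnb0 ⟨x, hxA, hx⟩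
        · by_contra hxA; exact hnb1 ⟨x, hxA, hx⟩
        · by_contra hxA; exact hnb2 ⟨x, hxA, hx⟩
    exact hSnot (by rw [h1]; exact Or.inl ⟨0, by norm_num, by rw [hA, hc0]⟩)
  · obtain ⟨hna0, ha1, ha2, ha3, hna4, hna5, hb0, hnb1, hnb2, hnb3, hb4, hb5⟩ := p
    have hA : A = Y 1 ∪ Y 2 ∪ Y 3 := by
      apply Set.Subset.antisymm
      · intro x hx
        obtain ⟨k, hk6, hxk⟩ := hmem x
        interval_cases k
        · exact absurd ⟨x, hx, hxk⟩ hna0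
        · exact Set.mem_union_left _ (Set.mem_union_left _ hxk)
        · exact Set.mem_union_left _ (Set.mem_union_right _ hxk)
        · exact Set.mem_union_right _ hxk
        · exact absurd ⟨x, hx, hxk⟩ hna4
        · exact absurd ⟨x, hx, hxk⟩ hna5
      · intro x hx
        rcases hx with (hx | hx) | hx
        · by_contra hxA; exact hnb1 ⟨x, hxA, hx⟩
        · by_contra hxA; exact hnb2 ⟨x, hxA, hx⟩
        · by_contra hxA; exact hnb3 ⟨x, hxA, hx⟩
    exact hSnot (by rw [h1]; exact Or.inl ⟨1, by norm_num, by rw [hA, hc1]⟩)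
  · obtain ⟨hna0, hna1, ha2, ha3, ha4, hna5, hb0, hb1, hnb2, hnb3, hnb4, hb5⟩ := p
    have hA : A = Y 2 ∪ Y 3 ∪ Y 4 := by
      apply Set.Subset.antisymm
      · intro x hx
        obtain ⟨k, hk6, hxk⟩ := hmem x
        interval_cases k
        · exact absurd ⟨x, hx, hxk⟩ hna0
        · exact absurd ⟨x, hx, hxk⟩ hna1
        · exact Set.mem_union_left _ (Set.mem_union_left _ hxk)
        · exact Set.mem_union_left _ (Set.mem_union_right _ hxk)
        · exact Set.mem_union_right _ hxk
        · exact absurd ⟨x, hx, hxk⟩ hna5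
      · intro x hx
        rcases hx with (hx | hx) | hx
        · by_contra hxA; exact hnb2 ⟨x, hxA, hx⟩
        · by_contra hxA; exact hnb3 ⟨x, hxA, hx⟩
        · by_contra hxA; exact hnb4 ⟨x, hxA, hx⟩
    exact hSnot (by rw [h1]; exact Or.inl ⟨2, by norm_num, by rw [hA, hc2]⟩)
  · obtain ⟨ha0, hna1, ha2, hna3, ha4, hna5, hnb0, hb1, hnb2, hb3, hnb4, hb5⟩ := p
    have hA : A = Y 0 ∪ Y 2 ∪ Y 4 := by
      apply Set.Subset.antisymm
      · intro x hx
        obtain ⟨k, hk6, hxk⟩ := hmem x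
        interval_cases k
        · exact Set.mem_union_left _ (Set.mem_union_left _ hxk)
        · exact absurd ⟨x, hx, hxk⟩ hna1
        · exact Set.mem_union_left _ (Set.mem_union_right _ hxk)
        · exact absurd ⟨x, hx, hxk⟩ hna3
        · exact Set.mem_union_right _ hxk
        · exact absurd ⟨x, hx, hxk⟩ hna5
      · intro x hx
        rcases hx with (hx | hx) | hx
        · by_contra hxA; exact hnb0 ⟨x, hxA, hx⟩
        · by_contra hxA; exact hnb2 ⟨x, hxA, hx⟩
        · by_contra hxA; exact hnb4 ⟨x, hxA, hx⟩
    exact hSnot (by rw [h1]; exact Or.inr (by rw [hA, hc3]))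
  · obtain ⟨hna0, hna1, hna2, ha3, ha4, ha5, hb0, hb1, hb2, hnb3, hnb4, hnb5⟩ := p
    have hA : A = Y 3 ∪ Y 4 ∪ Y 5 := by
      apply Set.Subset.antisymm
      · intro x hx
        obtain ⟨k, hk6, hxk⟩ := hmem x
        interval_cases k
        · exact absurd ⟨x, hx, hxk⟩ hna0
        · exact absurd ⟨x, hx, hxk⟩ hna1
        · exact absurd ⟨x, hx, hxk⟩ hna2
        · exact Set.mem_union_left _ (Set.mem_union_left _ hxk)
        · exact Set.mem_union_left _ (Set.mem_union_right _ hxk)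
        · exact Set.mem_union_right _ hxk
      · intro x hx
        rcases hx with (hx | hx) | hx
        · by_contra hxA; exact hnb3 ⟨x, hxA, hx⟩
        · by_contra hxA; exact hnb4 ⟨x, hxA, hx⟩
        · by_contra hxA; exact hnb5 ⟨x, hxA, hx⟩
    exact hSnot (by rw [h1]; refine Or.inl ⟨0, by norm_num, ?_⟩; rw [hA, hcr0, Set.pair_comm])
  · obtain ⟨ha0, hna1, hna2, hna3, ha4, ha5, hnb0, hb1, hb2, hb3, hnb4, hnb5⟩ := p
    have hA : A = Y 4 ∪ Y 5 ∪ Y 0 := by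
      apply Set.Subset.antisymm
      · intro x hx
        obtain ⟨k, hk6, hxk⟩ := hmem x
        interval_cases k
        · exact Set.mem_union_right _ hxk
        · exact absurd ⟨x, hx, hxk⟩ hna1
        · exact absurd ⟨x, hx, hxk⟩ hna2
        · exact absurd ⟨x, hx, hxk⟩ hna3
        · exact Set.mem_union_left _ (Set.mem_union_left _ hxk)
        · exact Set.mem_union_left _ (Set.mem_union_right _ hxk)
      · intro x hx
        rcases hx with (hx | hx) | hx
        · by_contra hxA; exact hnb4 ⟨x, hxA, hx⟩
        · by_contra hxA; exact hnb5 ⟨x, hxA, hx⟩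
        · by_contra hxA; exact hnb0 ⟨x, hxA, hx⟩
    exact hSnot (by rw [h1]; refine Or.inl ⟨1, by norm_num, ?_⟩; rw [hA, hcr1, Set.pair_comm])
  · obtain ⟨ha0, ha1, hna2, hna3, hna4, ha5, hnb0, hnb1, hb2, hb3, hb4, hnb5⟩ := p
    have hA : A = Y 5 ∪ Y 0 ∪ Y 1 := by
      apply Set.Subset.antisymm
      · intro x hx
        obtain ⟨k, hk6, hxk⟩ := hmem x
        interval_cases k
        · exact Set.mem_union_left _ (Set.mem_union_right _ hxk)
        · exact Set.mem_union_right _ hxk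
        · exact absurd ⟨x, hx, hxk⟩ hna2
        · exact absurd ⟨x, hx, hxk⟩ hna3
        · exact absurd ⟨x, hx, hxk⟩ hna4
        · exact Set.mem_union_left _ (Set.mem_union_left _ hxk)
      · intro x hx
        rcases hx with (hx | hx) | hx
        · by_contra hxA; exact hnb5 ⟨x, hxA, hx⟩
        · by_contra hxA; exact hnb0 ⟨x, hxA, hx⟩
        · by_contra hxA; exact hnb1 ⟨x, hxA, hx⟩
    exact hSnot (by rw [h1]; refine Or.inl ⟨2, by norm_num, ?_⟩; rw [hA, hcr2, Set.pair_comm])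
  · obtain ⟨hna0, ha1, hna2, ha3, hna4, ha5, hb0, hnb1, hb2, hnb3, hb4, hnb5⟩ := p
    have hA : A = Y 1 ∪ Y 3 ∪ Y 5 := by
      apply Set.Subset.antisymm
      · intro x hx
        obtain ⟨k, hk6, hxk⟩ := hmem x
        interval_cases k
        · exact absurd ⟨x, hx, hxk⟩ hna0
        · exact Set.mem_union_left _ (Set.mem_union_left _ hxk)
        · exact absurd ⟨x, hx, hxk⟩ hna2
        · exact Set.mem_union_left _ (Set.mem_union_right _ hxk)
        · exact absurd ⟨x, hx, hxk⟩ hna4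
        · exact Set.mem_union_right _ hxk
      · intro x hx
        rcases hx with (hx | hx) | hx
        · by_contra hxA; exact hnb1 ⟨x, hxA, hx⟩
        · by_contra hxA; exact hnb3 ⟨x, hxA, hx⟩
        · by_contra hxA; exact hnb5 ⟨x, hxA, hx⟩
    exact hSnot (by rw [h1]; refine Or.inr ?_; rw [hA, hcr3, Set.pair_comm])
end

section
/- Let 𝒮 = {S₁, S₂, S₃} be a strictly circular split system on a finite set X, and let S₅ be a split of X compatible with each of S₁, S₂, S₃. Then there exists x ∈ X such that S₅(x) ⊆ S_i(x) for all i = 2,3,4 — in particular S₅(x) is contained in one of the six blocks X_j of the circular partition. Consequently, S₅ is compatible with any further split whose parts are unions of the X_j's. -/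
variable {X : Type*}

/-- The `i`-th split of the strictly circular split system on the circular partition
`X = X₀ ∪̇ ... ∪̇ X₅` (`k = 3`): `S_i = X_i ∪ X_{i+1} ∪ X_{i+2} | the rest`,
indices mod 6. -/
def circSplit (Y : ℕ → Set X) (i : ℕ) : Set (Set X) :=
  {⋃ m ∈ Finset.range 3, Y ((i + m) % 6), ⋃ m ∈ Finset.range 3, Y ((i + 3 + m) % 6)}

/-- the window `{o, o+1, o+2}` (mod 6) as a finset of `Fin 6`. -/
def winF (o : ℕ) : Finset (Fin 6) :=
  {⟨o % 6, Nat.mod_lt _ (by norm_num)⟩, ⟨(o+1) % 6, Nat.mod_lt _ (by norm_num)⟩,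
   ⟨(o+2) % 6, Nat.mod_lt _ (by norm_num)⟩}

/-- the purely combinatorial core, checked by `decide`. -/
lemma comb : ∀ s t : Finset (Fin 6), s.Nonempty → t.Nonempty → s ∪ t = Finset.univ →
    (s ⊆ winF 0 ∨ t ⊆ winF 0 ∨ s ⊆ winF 3 ∨ t ⊆ winF 3) →
    (s ⊆ winF 1 ∨ t ⊆ winF 1 ∨ s ⊆ winF 4 ∨ t ⊆ winF 4) →
    (s ⊆ winF 2 ∨ t ⊆ winF 2 ∨ s ⊆ winF 5 ∨ t ⊆ winF 5) →
    ∃ j : Fin 6, s ⊆ {j} ∨ t ⊆ {j} := by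
  set_option maxRecDepth 10000 in decide

/-- let `𝒮 = {S₁, S₂, S₃}` be a strictly circular split system on `X`
(circular partition `X = X₀ ∪̇ ... ∪̇ X₅`), and let `S₅ = {C, Cᶜ}` be a split compatible
with each `S_i`.  Then there is some `x ∈ X` with `S₅(x) ⊆ S_i(x)` for all `i`; in
particular `S₅(x)` is contained in one of the six blocks `X_j`, and consequently `S₅`
is compatible with any further split whose parts are unions of the blocks `X_j`. -/
theorem stmt5 [Fintype X] (Y : ℕ → Set X)
    (hne : ∀ i < 6, (Y i).Nonempty)
    (hdisj : ∀ i < 6, ∀ j < 6, i ≠ j → Y i ∩ Y j = ∅)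
    (hcov : (⋃ i ∈ Finset.range 6, Y i) = Set.univ)
    (C : Set X) (hC : C.Nonempty) (hCc : Cᶜ.Nonempty)
    (hcomp : ∀ i < 3, Compatible ({C, Cᶜ} : Set (Set X)) (circSplit Y i)) :
    ∃ x : X,
      (∀ i < 3, ∀ A ∈ ({C, Cᶜ} : Set (Set X)), x ∈ A →
        ∀ B ∈ circSplit Y i, x ∈ B → A ⊆ B) ∧
      (∃ j < 6, ∀ A ∈ ({C, Cᶜ} : Set (Set X)), x ∈ A → A ⊆ Y j) ∧
      (∀ T : Set (Set X), IsSplit T →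
        (∀ B ∈ T, ∃ J : Finset ℕ, J ⊆ Finset.range 6 ∧ B = ⋃ j ∈ J, Y j) →
        Compatible ({C, Cᶜ} : Set (Set X)) T) := by
  classical
  -- every point is in some block
  have hcov' : ∀ x : X, ∃ i < 6, x ∈ Y i := by
    intro x
    have : x ∈ (⋃ i ∈ Finset.range 6, Y i) := by rw [hcov]; trivial
    simpa using this
  -- blocks meeting the same point are equal
  have hdisj' : ∀ {i j : ℕ}, i < 6 → j < 6 → ∀ {x : X}, x ∈ Y i → x ∈ Y j → i = j := by
    intro i j hi hj x hxi hxj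
    by_contra h
    have := hdisj i hi j hj h
    exact absurd (this ▸ Set.mem_inter hxi hxj) (Set.notMem_empty x)
  -- the support of a set among the six blocks
  set σ : Set X → Finset (Fin 6) :=
    fun D => Finset.univ.filter (fun j => (D ∩ Y j.val).Nonempty) with hσ
  have hmemσ : ∀ (D : Set X) (j : Fin 6), j ∈ σ D ↔ (D ∩ Y j.val).Nonempty := by
    intro D j; simp [hσ]
  have hσne : ∀ D : Set X, D.Nonempty → (σ D).Nonempty := by
    rintro D ⟨x, hx⟩
    obtain ⟨i, hi, hxi⟩ := hcov' x
    exact ⟨⟨i, hi⟩, (hmemσ D ⟨i, hi⟩).2 ⟨x, hx, hxi⟩⟩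
  have hσuniv : σ C ∪ σ Cᶜ = Finset.univ := by
    ext j
    simp only [Finset.mem_union, Finset.mem_univ, iff_true]
    obtain ⟨x, hx⟩ := hne j.val j.isLt
    by_cases hxC : x ∈ C
    · exact Or.inl ((hmemσ C j).2 ⟨x, hxC, hx⟩)
    · exact Or.inr ((hmemσ Cᶜ j).2 ⟨x, hxC, hx⟩)
  -- if D is inside the window of a split half, its support is inside winF
  have hwin : ∀ (D : Set X) (o : ℕ),
      D ⊆ (⋃ m ∈ Finset.range 3, Y ((o + m) % 6)) → σ D ⊆ winF o := by
    intro D o hsub j hj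
    obtain ⟨x, hxD, hxY⟩ := (hmemσ D j).1 hj
    have hx' : x ∈ (⋃ m ∈ Finset.range 3, Y ((o + m) % 6)) := hsub hxD
    simp only [Set.mem_iUnion, Finset.mem_range] at hx'
    obtain ⟨m, hm, hxm⟩ := hx'
    have hjeq : j.val = (o + m) % 6 :=
      hdisj' j.isLt (Nat.mod_lt _ (by norm_num)) hxY hxm
    interval_cases m <;>
      simp [winF, Fin.ext_iff, hjeq]
  -- extract, from each compatibility hypothesis, a window containment of supports
  have hkey : ∀ i : ℕ, Compatible ({C, Cᶜ} : Set (Set X)) (circSplit Y i) →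
      σ C ⊆ winF i ∨ σ Cᶜ ⊆ winF i ∨ σ C ⊆ winF (i + 3) ∨ σ Cᶜ ⊆ winF (i + 3) := by
    intro i ⟨A, hA, B, hB, hAB⟩
    have hcsub : Aᶜ ⊆ B := by
      intro x hx
      rcases (hAB ▸ Set.mem_univ x : x ∈ A ∪ B) with h | h
      · exact absurd h hx
      · exact h
    simp only [Set.mem_insert_iff, Set.mem_singleton_iff] at hA hB
    rcases hA with rfl | rfl <;> rcases hB with rfl | rfl
    · exact Or.inr (Or.inl (hwin _ _ hcsub))
    · exact Or.inr (Or.inr (Or.inr (hwin _ _ hcsub)))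
    · rw [compl_compl] at hcsub
      exact Or.inl (hwin _ _ hcsub)
    · rw [compl_compl] at hcsub
      exact Or.inr (Or.inr (Or.inl (hwin _ _ hcsub)))
  obtain ⟨j, hj⟩ := comb (σ C) (σ Cᶜ) (hσne C hC) (hσne Cᶜ hCc) hσuniv
    (hkey 0 (hcomp 0 (by norm_num))) (hkey 1 (hcomp 1 (by norm_num)))
    (hkey 2 (hcomp 2 (by norm_num)))
  -- D : the part of the split whose support is a single block
  obtain ⟨D, hDmem, hDne, hDσ⟩ :
      ∃ D ∈ ({C, Cᶜ} : Set (Set X)), D.Nonempty ∧ σ D ⊆ {j} := by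
    rcases hj with h | h
    · exact ⟨C, Or.inl rfl, hC, h⟩
    · exact ⟨Cᶜ, Or.inr rfl, hCc, h⟩
  -- D is contained in the single block Y j
  have hDsub : D ⊆ Y j.val := by
    intro x hx
    obtain ⟨i, hi, hxi⟩ := hcov' x
    have : (⟨i, hi⟩ : Fin 6) ∈ σ D := (hmemσ D ⟨i, hi⟩).2 ⟨x, hx, hxi⟩
    have := hDσ this
    simp only [Finset.mem_singleton] at this
    have : i = j.val := by rw [← this]
    exact this ▸ hxi
  obtain ⟨x₀, hx₀⟩ := hDne
  have hx₀Y : x₀ ∈ Y j.val := hDsub hx₀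
  -- any part of {C, Cᶜ} containing x₀ is D
  have hAeq : ∀ A ∈ ({C, Cᶜ} : Set (Set X)), x₀ ∈ A → A = D := by
    intro A hA hxA
    simp only [Set.mem_insert_iff, Set.mem_singleton_iff] at hA hDmem
    rcases hA with rfl | rfl <;> rcases hDmem with rfl | rfl
    · rfl
    · exact absurd hxA hx₀
    · exact absurd hx₀ hxA
    · rfl
  -- a block meeting a half of a circular split is contained in that half
  have hblock : ∀ (o : ℕ), x₀ ∈ (⋃ m ∈ Finset.range 3, Y ((o + m) % 6)) →
      Y j.val ⊆ ⋃ m ∈ Finset.range 3, Y ((o + m) % 6) := by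
    intro o hx
    simp only [Set.mem_iUnion, Finset.mem_range] at hx
    obtain ⟨m, hm, hxm⟩ := hx
    have hjeq : j.val = (o + m) % 6 :=
      hdisj' j.isLt (Nat.mod_lt _ (by norm_num)) hx₀Y hxm
    intro y hy
    rw [hjeq] at hy
    simp only [Set.mem_iUnion, Finset.mem_range]
    exact ⟨m, hm, hy⟩
  refine ⟨x₀, ?_, ?_, ?_⟩
  · intro i _ A hA hxA B hB hxB
    have hAD : A = D := hAeq A hA hxA
    simp only [circSplit, Set.mem_insert_iff, Set.mem_singleton_iff] at hB
    rcases hB with rfl | rfl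
    · exact hAD ▸ hDsub.trans (hblock i hxB)
    · exact hAD ▸ hDsub.trans (hblock (i + 3) hxB)
  · exact ⟨j.val, j.isLt, fun A hA hxA => (hAeq A hA hxA) ▸ hDsub⟩
  · rintro T ⟨B, _, _, rfl⟩ hT
    -- x₀ lies in one part of T; that part is a union of blocks, so contains Y j
    have hx₀T : ∃ B' ∈ ({B, Bᶜ} : Set (Set X)), x₀ ∈ B' := by
      by_cases h : x₀ ∈ B
      · exact ⟨B, Or.inl rfl, h⟩
      · exact ⟨Bᶜ, Or.inr rfl, h⟩
    obtain ⟨B', hB', hxB'⟩ := hx₀T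
    obtain ⟨J, hJ, rfl⟩ := hT B' hB'
    have hYsub : Y j.val ⊆ ⋃ k ∈ J, Y k := by
      simp only [Set.mem_iUnion] at hxB'
      obtain ⟨k, hk, hxk⟩ := hxB'
      have hk6 : k < 6 := Finset.mem_range.1 (hJ hk)
      have : j.val = k := hdisj' j.isLt hk6 hx₀Y hxk
      intro y hy
      rw [this] at hy
      simp only [Set.mem_iUnion]
      exact ⟨k, hk, hy⟩
    -- Dᶜ together with B' covers X
    have hDc : Dᶜ ∈ ({C, Cᶜ} : Set (Set X)) := by
      simp only [Set.mem_insert_iff, Set.mem_singleton_iff] at hDmem ⊢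
      rcases hDmem with rfl | rfl
      · exact Or.inr rfl
      · exact Or.inl (compl_compl C)
    refine ⟨Dᶜ, hDc, ⋃ k ∈ J, Y k, hB', ?_⟩
    apply Set.eq_univ_of_univ_subset
    intro x _
    by_cases h : x ∈ D
    · exact Or.inr (hYsub (hDsub h))
    · exact Or.inl h
end

section
/- The map κ : ℝ^{𝒰(𝒮)} → ℝ^X sending φ to the function x ↦ d₁(φ, φ_x) is continuous, and its restriction to the convex set H(𝒮, α) is affine, i.e., κ(γφ + βφ') = γκ(φ) + βκ(φ') for φ, φ' ∈ H(𝒮,α) and γ, β ≥ 0 with γ + β = 1. -/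
variable {X : Type*}

open Classical in
/-- The canonical image `φ_x` of `x ∈ X` in the Buneman complex:
`φ_x(A) = α(A|Ā)/2` if `x ∉ A`, and `0` otherwise. -/
noncomputable def phiX (α : Set X → ℝ) (x : X) (A : Set X) : ℝ :=
  if x ∈ A then 0 else α A / 2

/-- The map `κ : ℝ^{𝒰(𝒮)} → ℝ^X`, `κ(φ)(x) = d₁(φ, φ_x)`, where `U` is the (finite)
set of parts of the split system. -/
noncomputable def kappa (U : Finset (Set X)) (α : Set X → ℝ)
    (φ : Set X → ℝ) : X → ℝ :=
  fun x => ∑ A ∈ U, |φ A - phiX α x A|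

/-- Membership in the hypercube `H(𝒮, α)`. -/
def inH (U : Finset (Set X)) (α : Set X → ℝ) (φ : Set X → ℝ) : Prop :=
  ∀ A ∈ U, 0 ≤ φ A ∧ φ A + φ Aᶜ = α A / 2

/-- `κ` is continuous, and its restriction to the convex set `H(𝒮, α)`
is affine: `κ(γφ + βφ') = γκ(φ) + βκ(φ')` for `φ, φ' ∈ H(𝒮,α)`, `γ, β ≥ 0`,
`γ + β = 1`. -/
theorem stmt11 [Fintype X] (U : Finset (Set X)) (α : Set X → ℝ)
    (hU : ∀ A ∈ U, A.Nonempty ∧ Aᶜ.Nonempty ∧ Aᶜ ∈ U)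
    (hα : ∀ A ∈ U, 0 < α A ∧ α Aᶜ = α A) :
    Continuous (kappa U α) ∧
    ∀ φ φ' : Set X → ℝ, inH U α φ → inH U α φ' →
      ∀ γ β : ℝ, 0 ≤ γ → 0 ≤ β → γ + β = 1 →
        kappa U α (γ • φ + β • φ') = γ • kappa U α φ + β • kappa U α φ' := by
  constructor
  · refine continuous_pi fun x => continuous_finset_sum _ fun A _ => ?_
    exact ((continuous_apply A).sub continuous_const).abs
  · intro φ φ' hφ hφ' γ β hγ hβ hγβ
    funext x
    simp only [kappa, Pi.add_apply, Pi.smul_apply, smul_eq_mul]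
    rw [Finset.mul_sum, Finset.mul_sum, ← Finset.sum_add_distrib]
    refine Finset.sum_congr rfl fun A hA => ?_
    have h1 := hφ A hA
    have h2 := hφ' A hA
    have hc := (hU A hA).2.2
    have h1' := (hφ Aᶜ hc).1
    have h2' := (hφ' Aᶜ hc).1
    have hle1 : φ A ≤ α A / 2 := by linarith [h1.2]
    have hle2 : φ' A ≤ α A / 2 := by linarith [h2.2]
    unfold phiX
    by_cases hx : x ∈ A
    · simp only [hx, if_true, sub_zero]
      rw [abs_of_nonneg (add_nonneg (mul_nonneg hγ h1.1) (mul_nonneg hβ h2.1)), abs_of_nonneg h1.1, abs_of_nonneg h2.1]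
    · simp only [hx, if_false]
      have e1 : γ * φ A ≤ γ * (α A / 2) := mul_le_mul_of_nonneg_left hle1 hγ
      have e2 : β * φ' A ≤ β * (α A / 2) := mul_le_mul_of_nonneg_left hle2 hβ
      rw [abs_of_nonpos (by nlinarith), abs_of_nonpos (by linarith),
        abs_of_nonpos (by linarith)]
      ring_nf
      nlinarith [hγβ]
end

section
/- Let V, V' be finite-dimensional real vector spaces, P ⊆ V and P' ⊆ V' convex sets, f : V' → V an affine map with f(P') ⊆ P, T an extremal subset of P, and T' := f⁻¹(T) ∩ P'. If f maps T' bijectively onto T, then for every x ∈ T', f maps the smallest extremal subset of P' containing x bijectively onto the smallest extremal subset of P containing f(x). -/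
/-- `T` is an extremal subset of `P`: whenever a proper convex combination of two points
of `P` lies in `T`, both points lie in `T`. -/
def IsExtremal {V : Type*} [AddCommGroup V] [Module ℝ V] (P T : Set V) : Prop :=
  T ⊆ P ∧ ∀ u ∈ P, ∀ v ∈ P, ∀ γ β : ℝ, 0 < γ → 0 < β → γ + β = 1 →
    γ • u + β • v ∈ T → u ∈ T ∧ v ∈ T

/-- The smallest extremal subset of `P` containing `x` (the intersection of all extremal
subsets of `P` containing `x`). -/
def minExtremal {V : Type*} [AddCommGroup V] [Module ℝ V] (P : Set V) (x : V) : Set V :=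
  ⋂₀ {T : Set V | IsExtremal P T ∧ x ∈ T}

lemma mem_minExtremal {V : Type*} [AddCommGroup V] [Module ℝ V] (P : Set V) (x : V) :
    x ∈ minExtremal P x := fun _ hT => hT.2

lemma minExtremal_subset {V : Type*} [AddCommGroup V] [Module ℝ V] {P T : Set V} {x : V}
    (hT : IsExtremal P T) (hx : x ∈ T) : minExtremal P x ⊆ T :=
  Set.sInter_subset_of_mem ⟨hT, hx⟩

lemma isExtremal_minExtremal {V : Type*} [AddCommGroup V] [Module ℝ V] {P : Set V} {x : V}
    (hx : x ∈ P) : IsExtremal P (minExtremal P x) := by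
  refine ⟨minExtremal_subset ⟨Set.Subset.rfl, fun u hu v hv _ _ _ _ _ _ => ⟨hu, hv⟩⟩ hx, ?_⟩
  intro u hu v hv γ β hγ hβ hs hmem
  constructor <;> intro S hS
  · exact (hS.1.2 u hu v hv γ β hγ hβ hs (hmem S hS)).1
  · exact (hS.1.2 u hu v hv γ β hγ hβ hs (hmem S hS)).2

/-- Preimages (intersected with the source set) of extremal sets under affine maps
are extremal. -/
lemma isExtremal_preimage {V V' : Type*}
    [AddCommGroup V] [Module ℝ V] [AddCommGroup V'] [Module ℝ V']
    {P : Set V} {P' : Set V'} (f : V' →ᵃ[ℝ] V) (hf : f '' P' ⊆ P)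
    {S : Set V} (hS : IsExtremal P S) : IsExtremal P' (f ⁻¹' S ∩ P') := by
  refine ⟨Set.inter_subset_right, ?_⟩
  intro u hu v hv γ β hγ hβ hs hmem
  have hcomb : f (γ • u + β • v) = γ • f u + β • f v := Convex.combo_affine_apply hs
  have hfu : f u ∈ P := hf ⟨u, hu, rfl⟩
  have hfv : f v ∈ P := hf ⟨v, hv, rfl⟩
  have h := hS.2 (f u) hfu (f v) hfv γ β hγ hβ hs (by
    have := hmem.1
    simpa [Set.mem_preimage, hcomb] using this)
  exact ⟨⟨h.1, hu⟩, ⟨h.2, hv⟩⟩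

/-- Dress–Huber–Moulton: if an affine map `f` with `f(P') ⊆ P` maps
`T' = f⁻¹(T) ∩ P'` bijectively onto an extremal subset `T` of `P`, then for every
`x ∈ T'` it maps the smallest extremal subset of `P'` containing `x` bijectively onto
the smallest extremal subset of `P` containing `f(x)`. -/
theorem stmt15 {V V' : Type*}
    [AddCommGroup V] [Module ℝ V] [FiniteDimensional ℝ V]
    [AddCommGroup V'] [Module ℝ V'] [FiniteDimensional ℝ V']
    (P : Set V) (P' : Set V') (hP : Convex ℝ P) (hP' : Convex ℝ P')
    (f : V' →ᵃ[ℝ] V) (hf : f '' P' ⊆ P)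
    (T : Set V) (hT : IsExtremal P T)
    (T' : Set V') (hT' : T' = f ⁻¹' T ∩ P')
    (hbij : Set.BijOn f T' T) :
    ∀ x ∈ T', Set.BijOn f (minExtremal P' x) (minExtremal P (f x)) := by
  subst hT'
  intro x hx
  have hxP' : x ∈ P' := hx.2
  have hfxT : f x ∈ T := hx.1
  have hfxP : f x ∈ P := hT.1 hfxT
  set E' := minExtremal P' x with hE'
  set E := minExtremal P (f x) with hE
  have hE'ext : IsExtremal P' E' := isExtremal_minExtremal hxP'
  have hEext : IsExtremal P E := isExtremal_minExtremal hfxP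
  -- E' ⊆ T'
  have hE'T' : E' ⊆ f ⁻¹' T ∩ P' :=
    minExtremal_subset (isExtremal_preimage f hf hT) hx
  -- MapsTo : E' ⊆ f⁻¹ E ∩ P'
  have hmaps : Set.MapsTo f E' E := by
    have h : E' ⊆ f ⁻¹' E ∩ P' :=
      minExtremal_subset (isExtremal_preimage f hf hEext)
        ⟨mem_minExtremal P (f x), hxP'⟩
    exact fun y hy => (h hy).1
  -- image is extremal in P
  have himgext : IsExtremal P (f '' E') := by
    constructor
    · rintro _ ⟨y, hy, rfl⟩
      exact hf ⟨y, hE'ext.1 hy, rfl⟩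
    · rintro u hu v hv γ β hγ hβ hs ⟨w, hw, hwimg⟩
      have hwT' : w ∈ f ⁻¹' T ∩ P' := hE'T' hw
      have hfwT : f w ∈ T := hwT'.1
      have huvT : u ∈ T ∧ v ∈ T := hT.2 u hu v hv γ β hγ hβ hs (hwimg ▸ hfwT)
      obtain ⟨u', hu'T', hu'⟩ := hbij.surjOn huvT.1
      obtain ⟨v', hv'T', hv'⟩ := hbij.surjOn huvT.2
      have hcombP' : γ • u' + β • v' ∈ P' := hP' hu'T'.2 hv'T'.2 hγ.le hβ.le hs
      have hfcomb : f (γ • u' + β • v') = f w := by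
        rw [Convex.combo_affine_apply hs, hu', hv', hwimg]
      have hcombT' : γ • u' + β • v' ∈ f ⁻¹' T ∩ P' :=
        ⟨by simp [Set.mem_preimage, hfcomb, hfwT], hcombP'⟩
      have heq : γ • u' + β • v' = w := hbij.injOn hcombT' hwT' hfcomb
      have huv' : u' ∈ E' ∧ v' ∈ E' :=
        hE'ext.2 u' hu'T'.2 v' hv'T'.2 γ β hγ hβ hs (heq ▸ hw)
      exact ⟨⟨u', huv'.1, hu'⟩, ⟨v', huv'.2, hv'⟩⟩
  have hsurj : Set.SurjOn f E' E :=
    minExtremal_subset himgext ⟨x, mem_minExtremal P' x, rfl⟩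
  exact ⟨hmaps, hbij.injOn.mono hE'T', hsurj⟩
end

section
/- Let d be a metric on a finite set X and let T(d) denote the tight-span, i.e., the set of bounded faces of the polyhedron P(d) = {f ∈ ℝ^X : f(x) + f(y) ≥ d(x,y) for all x,y ∈ X}. Then T(d) is an extremal subset of P(d): if f, g ∈ P(d), γ, β > 0, γ + β = 1, and γf + βg ∈ T(d), then f, g ∈ T(d). -/
lemma stmt18_aux {X : Type*} (d : X → X → ℝ) (u v : X → ℝ)
    (hu : ∀ x y, d x y ≤ u x + u y) (hv : ∀ x y, d x y ≤ v x + v y)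
    (γ β : ℝ) (hγ : 0 < γ) (hβ : 0 < β) (hs : γ + β = 1)
    (hT : ∀ g : X → ℝ, (∀ x y, d x y ≤ g x + g y) → g ≤ γ • u + β • v →
      g = γ • u + β • v) :
    ∀ g : X → ℝ, (∀ x y, d x y ≤ g x + g y) → g ≤ u → g = u := by
  intro g hg hgu
  have hw : ∀ x y, d x y ≤ (γ • g + β • v) x + (γ • g + β • v) y := by
    intro x y
    have h1 := hg x y
    have h2 := hv x y
    simp only [Pi.add_apply, Pi.smul_apply, smul_eq_mul]
    have h3 := mul_le_mul_of_nonneg_left h1 hγ.le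
    have h4 := mul_le_mul_of_nonneg_left h2 hβ.le
    rw [mul_add] at h3 h4
    have h5 : γ * d x y + β * d x y = d x y := by rw [← add_mul, hs, one_mul]
    linarith
  have hwle : γ • g + β • v ≤ γ • u + β • v := by
    intro x
    simp only [Pi.add_apply, Pi.smul_apply, smul_eq_mul]
    have := hgu x
    nlinarith
  have heq := hT _ hw hwle
  funext x
  have hx := congrFun heq x
  simp only [Pi.add_apply, Pi.smul_apply, smul_eq_mul] at hx
  have : γ * g x = γ * u x := by linarith
  exact mul_left_cancel₀ (ne_of_gt hγ) this

/-- for a metric `d` on a finite set `X`, the tight-span `T(d)`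
(characterized as the set of minimal elements of `P(d) = {f : f(x) + f(y) ≥ d(x,y)}`
under the pointwise order) is an extremal subset of `P(d)`. -/
theorem stmt18 {X : Type*} [Fintype X] (d : X → X → ℝ)
    (hzero : ∀ x, d x x = 0) (hsymm : ∀ x y, d x y = d y x)
    (htri : ∀ x y z, d x z ≤ d x y + d y z)
    (hpos : ∀ x y, x ≠ y → 0 < d x y) :
    IsExtremal {f : X → ℝ | ∀ x y, d x y ≤ f x + f y}
      {f : X → ℝ | (∀ x y, d x y ≤ f x + f y) ∧
        ∀ g : X → ℝ, (∀ x y, d x y ≤ g x + g y) → g ≤ f → g = f} := by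
  constructor
  · intro f hf
    exact hf.1
  · intro u hu v hv γ β hγ hβ hs hT
    have hT' := hT.2
    constructor
    · exact ⟨hu, stmt18_aux d u v hu hv γ β hγ hβ hs hT'⟩
    · refine ⟨hv, stmt18_aux d v u hv hu β γ hβ hγ (by linarith) ?_⟩
      intro g hg hgle
      have hcomm : β • v + γ • u = γ • u + β • v := add_comm _ _
      rw [hcomm] at hgle ⊢
      exact hT' g hg hgle
end
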